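/- arXiv:2511.21453 — 3 statements merged into one kernel-verified Lean document; each statement's English description precedes it below -/
import Mathlib

section
/- For integers d ≥ 1 and even k with 0 ≤ k ≤ d, the sum over j from k/2 to d−k/2 of C(k, k/2)·C(d−k, j−k/2)/C(d, j) equals (d+1)/(k+1). -/
/-!
By the symmetry `C(d, j) C(j, s) C(d - j, s) = C(d, 2s) C(2s, s) C(d - 2s, j - s)` (both sides count
ordered triples of disjoint subsets of sizes `s`, `s`, `j - s`), the `j`-th summand equals
`C(j, s) C(d - j, s) / C(d, 2s)`. The upper Vandermonde identity
`∑ j, C(j, s) C(d - j, s) = C(d + 1, 2s + 1)` and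
`C(d + 1, 2s + 1) = (d + 1) / (2s + 1) · C(d, 2s)` finish the computation.
-/

open Finset

namespace Nat

theorem sum_range_choose_mul_choose (n s t : ℕ) :
    ∑ j ∈ range (n + 1), j.choose s * (n - j).choose t = (n + 1).choose (s + t + 1) := by
  induction n generalizing t with
  | zero => cases s <;> cases t <;> simp [choose_eq_zero_of_lt]
  | succ n ih =>
    cases t with
    | zero =>
      have hockey := ih 0
      simp only [choose_zero_right, Nat.mul_one, Nat.add_zero] at hockey ⊢
      rw [sum_range_succ, hockey, choose_succ_succ (n + 1) s, Nat.add_comm]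
    | succ t =>
      have pascal : ∀ j ∈ range (n + 1), j.choose s * (n + 1 - j).choose (t + 1) =
          j.choose s * (n - j).choose t + j.choose s * (n - j).choose (t + 1) := by
        intro j hj
        rw [Nat.sub_add_comm (mem_range_succ_iff.mp hj), choose_succ_succ, Nat.mul_add]
      rw [sum_range_succ, Nat.sub_self, choose_zero_succ, Nat.mul_zero, Nat.add_zero,
        sum_congr rfl pascal, sum_add_distrib, ih, ih, ← Nat.add_assoc s t 1,
        choose_succ_succ' (n + 1)]

theorem sum_Icc_choose_mul_choose (n s t : ℕ) :
    ∑ j ∈ Icc s (n - t), j.choose s * (n - j).choose t = (n + 1).choose (s + t + 1) := by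
  rw [← sum_range_choose_mul_choose]
  refine sum_subset (fun j hj => by simp only [mem_Icc, mem_range] at hj ⊢; omega) ?_
  intro j hj hjI
  simp only [mem_Icc, mem_range, not_and_or, not_le] at hj hjI
  rcases hjI with hjs | hjt
  · rw [choose_eq_zero_of_lt hjs, Nat.zero_mul]
  · rw [choose_eq_zero_of_lt (by omega : n - j < t), Nat.mul_zero]

theorem choose_mul_choose_sub_comm {m p q : ℕ} (h : p + q ≤ m) :
    m.choose p * (m - p).choose q = m.choose q * (m - q).choose p := by
  rw [← choose_symm (by omega : p ≤ m), choose_mul (by omega : q ≤ m - p),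
    ← choose_symm (by omega : p ≤ m - q)]
  congr 2; omega

theorem choose_mul_choose_mul_choose {d j a b : ℕ} (haj : a ≤ j) (hjb : j + b ≤ d) :
    d.choose j * j.choose a * (d - j).choose b
      = d.choose (a + b) * (a + b).choose a * (d - (a + b)).choose (j - a) := by
  rw [choose_mul haj, choose_mul (Nat.le_add_right a b), Nat.add_sub_cancel_left, Nat.mul_assoc,
    Nat.mul_assoc]
  convert congrArg (d.choose a * ·) (choose_mul_choose_sub_comm (by omega : j - a + b ≤ d - a))
    using 4 <;> omega

end Nat

theorem choose_succ_succ_div_choose {n k : ℕ} (h : k ≤ n) :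
    ((n + 1).choose (k + 1) : ℝ) / n.choose k = (n + 1) / (k + 1) := by
  have hnk : (n.choose k : ℝ) ≠ 0 := by exact_mod_cast (Nat.choose_pos h).ne'
  rw [div_eq_div_iff hnk (by positivity)]
  exact_mod_cast (Nat.add_one_mul_choose_eq n k).symm

theorem choose_mul_choose_div_choose_comm {d j a b : ℕ} (haj : a ≤ j) (hjb : j + b ≤ d) :
    ((a + b).choose a * (d - (a + b)).choose (j - a) : ℝ) / d.choose j
      = (j.choose a * (d - j).choose b : ℝ) / d.choose (a + b) := by
  have hj : (d.choose j : ℝ) ≠ 0 := by exact_mod_cast (Nat.choose_pos (by omega)).ne'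
  have hab : (d.choose (a + b) : ℝ) ≠ 0 := by exact_mod_cast (Nat.choose_pos (by omega)).ne'
  rw [div_eq_div_iff hj hab]
  have key : (d.choose j * j.choose a * (d - j).choose b : ℝ)
      = d.choose (a + b) * (a + b).choose a * (d - (a + b)).choose (j - a) := by
    exact_mod_cast Nat.choose_mul_choose_mul_choose haj hjb
  linear_combination -key

theorem stmt_0_general (d k : ℕ) (hk : k ≤ d) (hke : Even k) :
    ∑ j ∈ Finset.Icc (k / 2) (d - k / 2),
      ((k.choose (k / 2) * (d - k).choose (j - k / 2) : ℝ) / (d.choose j : ℝ))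
      = ((d : ℝ) + 1) / ((k : ℝ) + 1) := by
  obtain ⟨s, rfl⟩ := hke
  rw [show (s + s) / 2 = s by omega]
  calc ∑ j ∈ Icc s (d - s), ((s + s).choose s * (d - (s + s)).choose (j - s) : ℝ) / d.choose j
      = ∑ j ∈ Icc s (d - s), (j.choose s * (d - j).choose s : ℝ) / d.choose (s + s) :=
        sum_congr rfl fun j hj => by
          obtain ⟨hsj, hjd⟩ := mem_Icc.mp hj
          exact choose_mul_choose_div_choose_comm hsj (by omega)
    _ = ((d + 1).choose (s + s + 1) : ℝ) / d.choose (s + s) := by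
        rw [← sum_div, ← Nat.sum_Icc_choose_mul_choose]
        push_cast
        rfl
    _ = _ := by exact_mod_cast choose_succ_succ_div_choose hk

theorem stmt_0 (d k : ℕ) (hd : 1 ≤ d) (hk : k ≤ d) (hke : Even k) :
    ∑ j ∈ Finset.Icc (k / 2) (d - k / 2),
      ((k.choose (k / 2) * (d - k).choose (j - k / 2) : ℝ) / (d.choose j : ℝ))
      = ((d : ℝ) + 1) / ((k : ℝ) + 1) :=
  stmt_0_general d k hk hke
end

section
/- For each integer d ≥ 2 and t ∈ (0,1], the transfer function F_d(t) = −(1/(d+1))·(d·coth(d·artanh(t)) − 1/t) satisfies |F_d(t)| < 1. -/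
/-- Hyperbolic cotangent. -/
noncomputable def coth (x : ℝ) : ℝ := Real.cosh x / Real.sinh x

/-- Inverse hyperbolic tangent. -/
noncomputable def artanh (x : ℝ) : ℝ := (1 / 2) * Real.log ((1 + x) / (1 - x))

/-- The AKLT single-site transfer function `F_d`, extended by `F_d 0 = 0`. -/
noncomputable def F (D t : ℝ) : ℝ :=
  if t = 0 then 0 else -(1 / (D + 1)) * (D * coth (D * artanh t) - 1 / t)

/-! With `a = artanh t` one has `coth a = 1 / t`, so `(d + 1) F_d(t) = coth a - d coth (d a)`.
For `x > 0`, `1 / x < coth x < 1 / x + 1` (the first is `tanh x < x`, the second `2x < e^{2x} - 1`),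
and applying both at `x = a` and `x = d a` traps `d coth (d a) - coth a` in `(-1, d)`. -/

open Set
open Real hiding artanh

lemma coth_eq_inv_tanh (x : ℝ) : coth x = (tanh x)⁻¹ := by
  rw [coth, tanh_eq_sinh_div_cosh, inv_div]

lemma artanh_eq_real_artanh {t : ℝ} (ht : t ∈ Icc (-1) 1) : artanh t = Real.artanh t :=
  (artanh_eq_half_log ht).symm

lemma coth_artanh {t : ℝ} (ht : t ∈ Ioo (-1) 1) : coth (artanh t) = t⁻¹ := by
  rw [artanh_eq_real_artanh (Ioo_subset_Icc_self ht), coth_eq_inv_tanh, tanh_artanh ht]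

lemma artanh_one : artanh 1 = 0 := by
  simp [artanh]

lemma coth_zero : coth 0 = 0 := by
  simp [coth]

lemma sinh_lt_mul_cosh {x : ℝ} (hx : 0 < x) : sinh x < x * cosh x := by
  obtain ⟨c, ⟨hc0, hcx⟩, hc⟩ := exists_hasDerivAt_eq_slope sinh cosh hx
    continuous_sinh.continuousOn (fun c _ ↦ hasDerivAt_sinh c)
  rw [sinh_zero, sub_zero, sub_zero, eq_div_iff hx.ne'] at hc
  have hcosh : cosh c < cosh x := cosh_lt_cosh.2 (by rwa [abs_of_pos hc0, abs_of_pos hx])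
  nlinarith

lemma inv_lt_coth {x : ℝ} (hx : 0 < x) : x⁻¹ < coth x := by
  rw [coth, lt_div_iff₀ (sinh_pos_iff.2 hx), inv_mul_lt_iff₀ hx]
  exact sinh_lt_mul_cosh hx

lemma coth_lt_inv_add_one {x : ℝ} (hx : 0 < x) : coth x < x⁻¹ + 1 := by
  have hexp : 2 * x + 1 < exp x * exp x := by
    rw [← exp_add, ← two_mul]; exact add_one_lt_exp (by positivity)
  have hinv : exp (-x) * exp x = 1 := by rw [← exp_add, neg_add_cancel, exp_zero]
  have hkey : x * exp (-x) < sinh x := by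
    rw [sinh_eq]
    nlinarith [exp_pos x, exp_pos (-x)]
  have hcosh : cosh x = exp (-x) + sinh x := by rw [← cosh_sub_sinh]; ring
  rw [coth, div_lt_iff₀ (sinh_pos_iff.2 hx), hcosh, add_mul, one_mul, add_lt_add_iff_right,
    lt_inv_mul_iff₀ hx]
  exact hkey

lemma mul_coth_mul_sub_coth_mem_Ioo {D x : ℝ} (hD : 0 < D) (hx : 0 < x) :
    D * coth (D * x) - coth x ∈ Ioo (-1) D := by
  have hDx : D * (D * x)⁻¹ = x⁻¹ := by field_simp
  have h₁ := mul_lt_mul_of_pos_left (inv_lt_coth (mul_pos hD hx)) hD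
  have h₂ := mul_lt_mul_of_pos_left (coth_lt_inv_add_one (mul_pos hD hx)) hD
  constructor
  · linarith [coth_lt_inv_add_one hx]
  · nlinarith [inv_lt_coth hx]

-- `artanh 1` unfolds to `log (2 / 0) / 2 = 0`, and `coth 0 = 1 / 0 = 0`.
lemma F_one (D : ℝ) : F D 1 = (D + 1)⁻¹ := by
  simp [F, artanh_one, coth_zero]

lemma F_eq_of_mem_Ioo (D : ℝ) {t : ℝ} (ht : t ∈ Ioo 0 1) :
    F D t = (coth (artanh t) - D * coth (D * artanh t)) / (D + 1) := by
  rw [F, if_neg ht.1.ne', coth_artanh ⟨by linarith [ht.1], ht.2⟩]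
  ring

lemma abs_F_lt_one {D t : ℝ} (hD : 0 < D) (ht : t ∈ Ioc 0 1) : |F D t| < 1 := by
  rcases ht.2.eq_or_lt with rfl | ht₁
  · rw [F_one, abs_of_pos (by positivity)]
    exact inv_lt_one_of_one_lt₀ (by linarith)
  · have ha : 0 < artanh t := by
      rw [artanh_eq_real_artanh ⟨by linarith [ht.1], ht.2⟩]
      exact artanh_pos ⟨ht.1, ht₁⟩
    obtain ⟨hlo, hhi⟩ := mul_coth_mul_sub_coth_mem_Ioo hD ha
    rw [F_eq_of_mem_Ioo D ⟨ht.1, ht₁⟩, abs_div, abs_of_pos (by linarith : 0 < D + 1),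
      div_lt_one (by linarith), abs_lt]
    constructor <;> linarith

theorem stmt_5 (d : ℕ) (hd : 2 ≤ d) (t : ℝ) (ht : t ∈ Set.Ioc (0 : ℝ) 1) :
    |F (d : ℝ) t| < 1 :=
  abs_F_lt_one (Nat.cast_pos.2 (by omega)) ht
end

section
/- For every integer d ≥ 5, there exists t₀ ∈ (0,1] such that F_d(t₀) = −t₀, where F_d(t) = −(1/(d+1))·(d·coth(d·artanh(t)) − 1/t). -/
/-!
Substitute `t = tanh y`. Then
`F_d(t) + t = (coth y + (d + 1) tanh y - d coth (d y)) / (d + 1)`, which for small `y > 0`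
behaves like `-(d - 4)(d + 1) y / 3`, hence is negative when `d ≥ 5`. Concretely it is negative
at `y = 1/d`, by `tanh y ≤ y`, `coth y ≤ 1/y + y` and `coth 1 > 1.31`. At the `y > 1` with
`tanh y = d/(d + 1)` it is positive, since `coth (d y) ≤ 1 + 1/(d y)`. The intermediate value
theorem gives a zero in between.
-/

namespace Real

lemma continuous_tanh : Continuous tanh := by
  simp only [funext tanh_eq_sinh_div_cosh]
  exact continuous_sinh.div continuous_cosh fun x ↦ (cosh_pos x).ne'

lemma tanh_pos {x : ℝ} (hx : 0 < x) : 0 < tanh x := by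
  rw [tanh_eq_sinh_div_cosh]
  exact div_pos (sinh_pos_iff.mpr hx) (cosh_pos x)

lemma sinh_le_mul_cosh {x : ℝ} (hx : 0 ≤ x) : sinh x ≤ x * cosh x := by
  refine hasSum_le (fun n ↦ ?_) (hasSum_sinh x) ((hasSum_cosh x).mul_left x)
  rw [← mul_div_assoc, ← pow_succ']
  exact div_le_div_of_nonneg_left (by positivity) (by positivity)
    (by exact_mod_cast Nat.factorial_le (Nat.le_succ _))

lemma tanh_le_self {x : ℝ} (hx : 0 ≤ x) : tanh x ≤ x := by
  rw [tanh_eq_sinh_div_cosh, div_le_iff₀ (cosh_pos x)]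
  exact sinh_le_mul_cosh hx

end Real

lemma artanh_tanh (x : ℝ) : artanh (Real.tanh x) = x := by
  have hx : Real.tanh x ∈ Set.Icc (-1) 1 :=
    ⟨(Real.neg_one_lt_tanh x).le, (Real.tanh_lt_one x).le⟩
  rw [artanh, ← Real.artanh_eq_half_log hx, Real.artanh_tanh]

lemma one_div_tanh (x : ℝ) : 1 / Real.tanh x = coth x := by
  rw [coth, Real.tanh_eq_sinh_div_cosh, one_div_div]

lemma coth_eq_exp (x : ℝ) : coth x = (Real.exp (2 * x) + 1) / (Real.exp (2 * x) - 1) := by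
  have h2 : Real.exp (2 * x) = Real.exp x * Real.exp x := by rw [two_mul, Real.exp_add]
  rw [coth, Real.cosh_eq, Real.sinh_eq, Real.exp_neg, h2]
  field_simp

lemma continuousOn_coth : ContinuousOn coth {0}ᶜ :=
  Real.continuous_cosh.continuousOn.div Real.continuous_sinh.continuousOn
    fun _ hx ↦ Real.sinh_ne_zero.mpr hx

lemma coth_le_one_add_inv {x : ℝ} (hx : 0 < x) : coth x ≤ 1 + x⁻¹ := by
  have hexp : 2 * x + 1 ≤ Real.exp (2 * x) := Real.add_one_le_exp _
  have hinv : 2 ≤ x⁻¹ * (Real.exp (2 * x) - 1) := by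
    rw [inv_mul_eq_div, le_div_iff₀ hx]; linarith
  rw [coth_eq_exp, div_le_iff₀ (by linarith)]
  linarith

lemma coth_le_inv_add_self {x : ℝ} (h0 : 0 < x) (h1 : x ≤ 1) : coth x ≤ x⁻¹ + x := by
  have hsq : x ^ 2 ≤ 1 := pow_le_one₀ h0.le h1
  have hcosh : Real.cosh x ≤ 1 + x ^ 2 := by
    calc Real.cosh x ≤ Real.exp (x ^ 2 / 2) := Real.cosh_le_exp_half_sq x
      _ ≤ 1 / (1 - x ^ 2 / 2) :=
        Real.exp_bound_div_one_sub_of_interval (by positivity) (by linarith)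
      _ ≤ 1 + x ^ 2 := by rw [div_le_iff₀ (by linarith)]; nlinarith
  have hsinh : x ≤ Real.sinh x := Real.self_le_sinh_iff.mpr h0.le
  rw [coth, div_le_iff₀ (Real.sinh_pos_iff.mpr h0)]
  have : x⁻¹ + x = (1 + x ^ 2) / x := by field_simp
  rw [this, div_mul_eq_mul_div, le_div_iff₀ h0]
  nlinarith

lemma lt_coth_one : 131 / 100 < coth 1 := by
  have he := Real.exp_one_lt_d9
  have he' := Real.exp_one_gt_d9
  have h2 : Real.exp (2 * 1) = Real.exp 1 * Real.exp 1 := by rw [two_mul, Real.exp_add]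
  rw [coth_eq_exp, h2, lt_div_iff₀ (by nlinarith)]
  nlinarith

noncomputable def fixedPointGap (D y : ℝ) : ℝ :=
  coth y + (D + 1) * Real.tanh y - D * coth (D * y)

section fixedPointGap

variable {D y : ℝ}

lemma F_tanh_add_tanh (hD : D + 1 ≠ 0) (hy : y ≠ 0) :
    F D (Real.tanh y) + Real.tanh y = fixedPointGap D y / (D + 1) := by
  have htanh : Real.tanh y ≠ 0 := by
    rw [Real.tanh_eq_sinh_div_cosh]
    exact div_ne_zero (Real.sinh_ne_zero.mpr hy) (Real.cosh_pos y).ne'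
  rw [F, if_neg htanh, artanh_tanh, one_div_tanh, fixedPointGap]
  field_simp
  ring

lemma continuousOn_fixedPointGap (hD : D ≠ 0) : ContinuousOn (fixedPointGap D) (Set.Ioi 0) := by
  have hcoth : ContinuousOn coth (Set.Ioi 0) :=
    continuousOn_coth.mono fun _ hx ↦ (Set.mem_Ioi.mp hx).ne'
  have hcothD : ContinuousOn (fun y ↦ coth (D * y)) (Set.Ioi 0) :=
    continuousOn_coth.comp (continuousOn_const.mul continuousOn_id)
      fun y hy ↦ mul_ne_zero hD (Set.mem_Ioi.mp hy).ne'
  exact (hcoth.add (continuousOn_const.mul Real.continuous_tanh.continuousOn)).sub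
    (continuousOn_const.mul hcothD)

lemma fixedPointGap_inv_lt_zero (hD : 5 ≤ D) : fixedPointGap D D⁻¹ < 0 := by
  have hD0 : 0 < D := by linarith
  have hy : D⁻¹ ≤ 1 := inv_le_one_of_one_le₀ (by linarith)
  have htanh : Real.tanh D⁻¹ ≤ D⁻¹ := Real.tanh_le_self (by positivity)
  have hcoth : coth D⁻¹ ≤ D + D⁻¹ := by
    simpa using coth_le_inv_add_self (inv_pos.mpr hD0) hy
  have hcoth_one := lt_coth_one
  have hinv : D⁻¹ ≤ 1 / 5 := by rw [inv_le_comm₀ hD0 (by norm_num)]; linarith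
  have hmul : (D + 1) * Real.tanh D⁻¹ ≤ 1 + D⁻¹ := by
    nlinarith [mul_inv_cancel₀ hD0.ne']
  rw [fixedPointGap, mul_inv_cancel₀ hD0.ne']
  nlinarith

lemma fixedPointGap_pos_of_tanh_eq (hD : 0 < D) (hy : 1 ≤ y) (htanh : Real.tanh y = D / (D + 1)) :
    0 < fixedPointGap D y := by
  have hy0 : 0 < y := by linarith
  have hcoth : coth y = (D + 1) / D := by rw [← one_div_tanh, htanh, one_div_div]
  have hcothD : D * coth (D * y) ≤ D + y⁻¹ := by
    calc D * coth (D * y) ≤ D * (1 + (D * y)⁻¹) :=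
          mul_le_mul_of_nonneg_left (coth_le_one_add_inv (by positivity)) hD.le
      _ = D + y⁻¹ := by field_simp
  have hinv : y⁻¹ ≤ 1 := inv_le_one_of_one_le₀ hy
  have hcoth_gt : 1 < (D + 1) / D := by rw [one_lt_div hD]; linarith
  rw [fixedPointGap, hcoth, htanh, mul_div_cancel₀ _ (by linarith : D + 1 ≠ 0)]
  linarith

lemma div_add_one_mem_Ioo (hD : 0 < D) : D / (D + 1) ∈ Set.Ioo (-1) 1 := by
  constructor
  · rw [lt_div_iff₀ (by linarith)]; linarith
  · rw [div_lt_one (by linarith)]; linarith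

lemma one_lt_artanh_div_add_one (hD : 4 ≤ D) : 1 < Real.artanh (D / (D + 1)) := by
  have hratio : (1 + D / (D + 1)) / (1 - D / (D + 1)) = 2 * D + 1 := by
    field_simp
    ring
  have hexp : Real.exp 2 < 2 * D + 1 := by
    have h2 : Real.exp 2 = Real.exp 1 * Real.exp 1 := by rw [← Real.exp_add]; norm_num
    nlinarith [Real.exp_one_lt_d9, Real.exp_pos 1]
  rw [Real.artanh_eq_half_log (Set.Ioo_subset_Icc_self (div_add_one_mem_Ioo (by linarith))),
    hratio]
  have := (Real.lt_log_iff_exp_lt (by linarith)).mpr hexp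
  linarith

end fixedPointGap

theorem stmt_9 (d : ℕ) (hd : 5 ≤ d) :
    ∃ t₀ ∈ Set.Ioc (0 : ℝ) 1, F (d : ℝ) t₀ = -t₀ := by
  have hD : (5 : ℝ) ≤ d := by exact_mod_cast hd
  have hD0 : (0 : ℝ) < d := by linarith
  set Y := Real.artanh (d / (d + 1))
  have hY : 1 < Y := one_lt_artanh_div_add_one (by linarith)
  have htanhY : Real.tanh Y = d / (d + 1) :=
    Real.tanh_artanh (div_add_one_mem_Ioo hD0)
  have hle : (d : ℝ)⁻¹ ≤ Y := (inv_le_one_of_one_le₀ (by linarith)).trans hY.le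
  have hcont : ContinuousOn (fixedPointGap d) (Set.Icc (d : ℝ)⁻¹ Y) :=
    (continuousOn_fixedPointGap hD0.ne').mono fun y hy ↦ (inv_pos.mpr hD0).trans_le hy.1
  obtain ⟨y₀, hy₀, hgap⟩ := intermediate_value_Icc hle hcont
    ⟨(fixedPointGap_inv_lt_zero hD).le, (fixedPointGap_pos_of_tanh_eq hD0 hY.le htanhY).le⟩
  have hy₀ : 0 < y₀ := (inv_pos.mpr hD0).trans_le hy₀.1
  refine ⟨Real.tanh y₀, ⟨Real.tanh_pos hy₀, (Real.tanh_lt_one y₀).le⟩, ?_⟩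
  have hfix : F d (Real.tanh y₀) + Real.tanh y₀ = 0 := by
    rw [F_tanh_add_tanh (by linarith) hy₀.ne', hgap, zero_div]
  linarith
end
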